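/- Let M, M' be multisets over α, N, N' multisets over β, and f : α → K, g : β → K key functions. Then card (J(M,N) − J(M',N')) ≤ mf f M * card (N − N') + mf g N * card (M − M') + card (M − M') * card (N − N'). (This is the self-join case of the paper's Lemma 2: when both input relations change, changed output rows come from three classes — original rows of M matching changed rows of N, original rows of N matching changed rows of M, and changed rows matching changed rows.) -/

import Mathlib

/-- Maximum frequency of a join key: the max over values of the multiplicity in `M.map f`. -/
def mf {α K : Type*} [DecidableEq K] (f : α → K) (M : Multiset α) : ℕ :=
  (M.map f).toFinset.sup fun v => (M.map f).count v

/-- Equijoin of two multisets on key functions `f` and `g`. -/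
def equijoin {α β K : Type*} [DecidableEq K] (f : α → K) (g : β → K)
    (M : Multiset α) (N : Multiset β) : Multiset (α × β) :=
  M.bind fun a => (N.filter fun b => f a = g b).map (Prod.mk a)

section aux
variable {α β K : Type*} [DecidableEq K] (f : α → K) (g : β → K)

lemma count_le_mf (M : Multiset α) (v : K) : (M.map f).count v ≤ mf f M := by
  rcases Nat.eq_zero_or_pos ((M.map f).count v) with h | h
  · simp [h]
  · exact Finset.le_sup (f := fun v => (M.map f).count v) (Multiset.mem_toFinset.2 (Multiset.count_pos.1 h))

lemma mf_mono {A M : Multiset α} (h : A ≤ M) : mf f A ≤ mf f M := by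
  apply Finset.sup_le
  intro v _
  exact le_trans (Multiset.count_le_of_le v (Multiset.map_le_map h)) (count_le_mf f M v)

lemma equijoin_add_left (A A' : Multiset α) (B : Multiset β) :
    equijoin f g (A + A') B = equijoin f g A B + equijoin f g A' B :=
  Multiset.add_bind _ _ _

lemma equijoin_add_right (A : Multiset α) (B B' : Multiset β) :
    equijoin f g A (B + B') = equijoin f g A B + equijoin f g A B' := by
  unfold equijoin
  rw [← Multiset.bind_add]
  apply Multiset.bind_congr
  intro a _
  rw [Multiset.filter_add, Multiset.map_add]

lemma card_filter_eq_count (a : α) (B : Multiset β) :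
    Multiset.card (B.filter fun b => f a = g b) = (B.map g).count (f a) := by
  rw [Multiset.count_map]

lemma card_equijoin (A : Multiset α) (B : Multiset β) :
    Multiset.card (equijoin f g A B) = (A.map fun a => (B.map g).count (f a)).sum := by
  rw [equijoin, Multiset.card_bind]
  congr 1
  apply Multiset.map_congr rfl
  intro a _
  simp [card_filter_eq_count]

lemma sum_indicator_eq_card_filter (p : β → Prop) [DecidablePred p] (B : Multiset β) :
    (B.map fun b => if p b then 1 else 0).sum = Multiset.card (B.filter p) := by
  induction B using Multiset.induction with
  | empty => simp
  | cons b B ihB =>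
    by_cases hb : p b <;> simp [Multiset.filter_cons, hb, ihB, Nat.add_comm]

lemma sum_count_swap (A : Multiset α) (B : Multiset β) :
    (A.map fun a => (B.map g).count (f a)).sum = (B.map fun b => (A.map f).count (g b)).sum := by
  induction A using Multiset.induction with
  | empty => simp
  | cons a A ih =>
    simp only [Multiset.map_cons, Multiset.sum_cons, ih]
    have : ∀ b : β, (f a ::ₘ A.map f).count (g b)
        = (A.map f).count (g b) + (if g b = f a then 1 else 0) := by
      intro b
      rw [Multiset.count_cons]
    rw [Multiset.map_congr rfl fun b _ => this b, Multiset.sum_map_add]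
    have h1 := sum_indicator_eq_card_filter (fun b => g b = f a) B
    have h2 : (B.map g).count (f a) = Multiset.card (B.filter fun b => g b = f a) := by
      rw [Multiset.count_map]
      congr 1
      apply Multiset.filter_congr
      intro b _
      constructor <;> (intro h; exact h.symm)
    rw [h1, h2, Nat.add_comm]

lemma equijoin_mono {A A' : Multiset α} {B B' : Multiset β} (hA : A ≤ A') (hB : B ≤ B') :
    equijoin f g A B ≤ equijoin f g A' B' := by
  obtain ⟨C, rfl⟩ := Multiset.le_iff_exists_add.1 hA
  obtain ⟨D, rfl⟩ := Multiset.le_iff_exists_add.1 hB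
  rw [equijoin_add_left, equijoin_add_right]
  exact le_add_right (le_add_right le_rfl)

lemma card_equijoin_le_right (A : Multiset α) (B : Multiset β) :
    Multiset.card (equijoin f g A B) ≤ Multiset.card A * mf g B := by
  rw [card_equijoin]
  have := Multiset.sum_le_card_nsmul (A.map fun a => (B.map g).count (f a)) (mf g B)
    (by rintro x hx; obtain ⟨a, _, rfl⟩ := Multiset.mem_map.1 hx; exact count_le_mf g B (f a))
  simpa [Multiset.card_map, smul_eq_mul] using this

lemma card_equijoin_le_left (A : Multiset α) (B : Multiset β) :
    Multiset.card (equijoin f g A B) ≤ mf f A * Multiset.card B := by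
  rw [card_equijoin, sum_count_swap]
  have := Multiset.sum_le_card_nsmul (B.map fun b => (A.map f).count (g b)) (mf f A)
    (by rintro x hx; obtain ⟨b, _, rfl⟩ := Multiset.mem_map.1 hx; exact count_le_mf f A (g b))
  simpa [Multiset.card_map, smul_eq_mul, Nat.mul_comm] using this

lemma card_equijoin_le_mul (A : Multiset α) (B : Multiset β) :
    Multiset.card (equijoin f g A B) ≤ Multiset.card A * Multiset.card B := by
  rw [card_equijoin]
  have := Multiset.sum_le_card_nsmul (A.map fun a => (B.map g).count (f a)) (Multiset.card B)
    (by rintro x hx; obtain ⟨a, _, rfl⟩ := Multiset.mem_map.1 hx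
        simpa using (Multiset.count_le_card (f a) (B.map g)))
  simpa [Multiset.card_map, smul_eq_mul] using this

end aux

theorem stmt6 {α β K : Type*} [DecidableEq α] [DecidableEq β] [DecidableEq K]
    (M M' : Multiset α) (N N' : Multiset β) (f : α → K) (g : β → K) :
    Multiset.card (equijoin f g M N - equijoin f g M' N')
      ≤ mf f M * Multiset.card (N - N') + mf g N * Multiset.card (M - M')
        + Multiset.card (M - M') * Multiset.card (N - N') := by
  have hM : (M - M') + M ∩ M' = M := Multiset.sub_add_inter M M'
  have hN : (N - N') + N ∩ N' = N := Multiset.sub_add_inter N N'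
  have hdecomp : equijoin f g M N
      = equijoin f g (M - M') (N - N') + equijoin f g (M - M') (N ∩ N')
        + equijoin f g (M ∩ M') (N - N') + equijoin f g (M ∩ M') (N ∩ N') := by
    conv_lhs => rw [← hM, ← hN]
    rw [equijoin_add_left, equijoin_add_right, equijoin_add_right]
    abel
  have hle : equijoin f g (M ∩ M') (N ∩ N') ≤ equijoin f g M' N' :=
    equijoin_mono f g Multiset.inter_le_right Multiset.inter_le_right
  have key : equijoin f g M N - equijoin f g M' N'
      ≤ equijoin f g (M - M') (N - N') + equijoin f g (M - M') (N ∩ N')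
        + equijoin f g (M ∩ M') (N - N') := by
    rw [tsub_le_iff_right, hdecomp]
    exact add_le_add_right hle _
  calc Multiset.card (equijoin f g M N - equijoin f g M' N')
      ≤ Multiset.card (equijoin f g (M - M') (N - N'))
        + Multiset.card (equijoin f g (M - M') (N ∩ N'))
        + Multiset.card (equijoin f g (M ∩ M') (N - N')) := by
          simpa using Multiset.card_le_card key
    _ ≤ Multiset.card (M - M') * Multiset.card (N - N')
        + mf g N * Multiset.card (M - M')
        + mf f M * Multiset.card (N - N') := by
          gcongr ?_ + ?_ + ?_
          · exact card_equijoin_le_mul f g _ _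
          · calc Multiset.card (equijoin f g (M - M') (N ∩ N'))
                ≤ Multiset.card (M - M') * mf g (N ∩ N') := card_equijoin_le_right f g _ _
              _ ≤ Multiset.card (M - M') * mf g N := by
                  exact Nat.mul_le_mul_left _ (mf_mono g Multiset.inter_le_left)
              _ = mf g N * Multiset.card (M - M') := Nat.mul_comm _ _
          · calc Multiset.card (equijoin f g (M ∩ M') (N - N'))
                ≤ mf f (M ∩ M') * Multiset.card (N - N') := card_equijoin_le_left f g _ _
              _ ≤ mf f M * Multiset.card (N - N') :=
                  Nat.mul_le_mul_right _ (mf_mono f Multiset.inter_le_left)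
    _ = mf f M * Multiset.card (N - N') + mf g N * Multiset.card (M - M')
        + Multiset.card (M - M') * Multiset.card (N - N') := by ring
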